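/- Let T be A-bounded and α ∈ (0,1). If there exists a sequence (x_n) with ‖x_n‖_A = 1 such that ‖Tx_n‖_A → ‖T‖_A and |⟨Tx_n,x_n⟩_A| → w_A(T), then ‖T‖_{A,α} = sqrt(α w_A(T)² + (1−α)‖T‖_A²). -/

import Mathlib

open scoped ComplexOrder
open ContinuousLinearMap Filter Topology

variable {H : Type*} [NormedAddCommGroup H] [InnerProductSpace ℂ H] [CompleteSpace H]

/-- The A-semi-inner product `⟨x, y⟩_A = ⟨A x, y⟩` (Mathlib convention: conjugate
linear in the first variable). -/
noncomputable def aInner (A : H →L[ℂ] H) (x y : H) : ℂ := inner ℂ (A x) y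

/-- The A-seminorm `‖x‖_A = sqrt ⟨x, x⟩_A`. -/
noncomputable def aNorm (A : H →L[ℂ] H) (x : H) : ℝ := Real.sqrt (aInner A x x).re

/-- `T` is A-bounded. -/
def ABounded (A T : H →L[ℂ] H) : Prop := ∃ c > 0, ∀ x, aNorm A (T x) ≤ c * aNorm A x

/-- The A-operator seminorm. -/
noncomputable def opNormA (A T : H →L[ℂ] H) : ℝ :=
  sSup {r | ∃ x ∈ closure (Set.range A), aNorm A x = 1 ∧ r = aNorm A (T x)}

/-- The A-numerical radius. -/
noncomputable def wA (A T : H →L[ℂ] H) : ℝ :=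
  sSup {r | ∃ x, aNorm A x = 1 ∧ r = ‖aInner A (T x) x‖}

/-- The A-Crawford number. -/
noncomputable def cA (A T : H →L[ℂ] H) : ℝ :=
  sInf {r | ∃ x, aNorm A x = 1 ∧ r = ‖aInner A (T x) x‖}

/-- The `A_α`-seminorm `‖T‖_{A,α}`. -/
noncomputable def alphaNorm (A T : H →L[ℂ] H) (α : ℝ) : ℝ :=
  sSup {r | ∃ x, aNorm A x = 1 ∧
    r = Real.sqrt (α * ‖aInner A (T x) x‖ ^ 2 + (1 - α) * aNorm A (T x) ^ 2)}

/-- `S` is the A-adjoint `T^{♯_A}` of `T`: the solution of `A X = T* A` whose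
range lies in the closure of the range of `A`. -/
def IsAAdjoint (A T S : H →L[ℂ] H) : Prop :=
  A ∘L S = (ContinuousLinearMap.adjoint T) ∘L A ∧ ∀ x, S x ∈ closure (Set.range A)

/-!
Every A-unit vector `z` satisfies `|⟨Tz, z⟩_A| ≤ w_A(T)` and `‖Tz‖_A ≤ ‖T‖_A`. The second
bound is not immediate, since `‖T‖_A` is a supremum over `closure (range A)` only: the orthogonal
projection `z₁` of `z` onto that closed subspace has `A (z - z₁) = 0`, so `‖z - z₁‖_A = 0`, hence
also `‖T (z - z₁)‖_A = 0` by A-boundedness, and `z₁` has the same `‖z‖_A` and `‖Tz‖_A` as `z`.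
Thus `√(α w_A(T)² + (1 - α) ‖T‖_A²)` bounds the set whose supremum is `‖T‖_{A,α}`, and the given
sequence produces elements of that set converging to the bound.
-/

section

variable {A : H →L[ℂ] H}

lemma aInner_eq_inner_sqrt (hA : A.IsPositive) (x y : H) :
    aInner A x y = inner ℂ (CFC.sqrt A x) (CFC.sqrt A y) := by
  have hA' : 0 ≤ A := (nonneg_iff_isPositive A).mpr hA
  have hsa : IsSelfAdjoint (CFC.sqrt A) := .of_nonneg (CFC.sqrt_nonneg A)
  conv_lhs => rw [aInner, ← CFC.sqrt_mul_sqrt_self A hA', mul_apply_eq_comp]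
  rw [← adjoint_inner_left, hsa.adjoint_eq]

lemma aNorm_eq_norm_sqrt (hA : A.IsPositive) (x : H) : aNorm A x = ‖CFC.sqrt A x‖ := by
  rw [aNorm, aInner_eq_inner_sqrt hA, norm_eq_sqrt_re_inner (𝕜 := ℂ), RCLike.re_to_complex]

omit [CompleteSpace H] in
lemma aNorm_nonneg (x : H) : 0 ≤ aNorm A x := Real.sqrt_nonneg _

lemma norm_aInner_le (hA : A.IsPositive) (x y : H) : ‖aInner A x y‖ ≤ aNorm A x * aNorm A y := by
  rw [aInner_eq_inner_sqrt hA, aNorm_eq_norm_sqrt hA, aNorm_eq_norm_sqrt hA]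
  exact norm_inner_le_norm _ _

omit [CompleteSpace H] in
lemma aNorm_eq_zero_of_apply_eq_zero {v : H} (hv : A v = 0) : aNorm A v = 0 := by
  simp [aNorm, aInner, hv]

lemma aNorm_eq_of_aNorm_sub_eq_zero (hA : A.IsPositive) {u v : H} (h : aNorm A (u - v) = 0) :
    aNorm A u = aNorm A v := by
  rw [aNorm_eq_norm_sqrt hA, map_sub, norm_eq_zero, sub_eq_zero] at h
  rw [aNorm_eq_norm_sqrt hA, aNorm_eq_norm_sqrt hA, h]

lemma exists_mem_closure_range_adjoint_apply_sub_eq_zero (A : H →L[ℂ] H) (z : H) :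
    ∃ z₁ ∈ closure (Set.range A), adjoint A (z - z₁) = 0 := by
  set K := (LinearMap.range (A : H →ₗ[ℂ] H)).topologicalClosure
  have hK : (K : Set H) = closure (Set.range A) := by
    rw [Submodule.topologicalClosure_coe, LinearMap.coe_range, coe_coe]
  refine ⟨K.starProjection z, hK ▸ K.starProjection_apply_mem z, ?_⟩
  have h := K.sub_starProjection_mem_orthogonal z
  rwa [Submodule.orthogonal_closure, orthogonal_range] at h

variable {T : H →L[ℂ] H}

lemma ABounded.aNorm_apply_eq_of_apply_sub_eq_zero (hA : A.IsPositive) (hT : ABounded A T)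
    {u v : H} (h : A (u - v) = 0) : aNorm A (T u) = aNorm A (T v) := by
  obtain ⟨c, -, hc⟩ := hT
  refine aNorm_eq_of_aNorm_sub_eq_zero hA (le_antisymm ?_ (aNorm_nonneg _))
  simpa [← map_sub, aNorm_eq_zero_of_apply_eq_zero h] using hc (u - v)

omit [CompleteSpace H] in
lemma ABounded.exists_aNorm_apply_le (hT : ABounded A T) :
    ∃ c, ∀ z, aNorm A z = 1 → aNorm A (T z) ≤ c := by
  obtain ⟨c, -, hc⟩ := hT
  exact ⟨c, fun z hz => by simpa [hz] using hc z⟩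

lemma ABounded.aNorm_apply_le_opNormA (hA : A.IsPositive) (hT : ABounded A T) {z : H}
    (hz : aNorm A z = 1) : aNorm A (T z) ≤ opNormA A T := by
  obtain ⟨c, hc⟩ := hT.exists_aNorm_apply_le
  obtain ⟨z₁, hz₁, hA₁⟩ := exists_mem_closure_range_adjoint_apply_sub_eq_zero A z
  rw [hA.isSelfAdjoint.adjoint_eq] at hA₁
  rw [hT.aNorm_apply_eq_of_apply_sub_eq_zero hA hA₁]
  have hz₁_unit : aNorm A z₁ = 1 :=
    (aNorm_eq_of_aNorm_sub_eq_zero hA (aNorm_eq_zero_of_apply_eq_zero hA₁)).symm.trans hz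
  refine le_csSup ⟨c, ?_⟩ ⟨z₁, hz₁, hz₁_unit, rfl⟩
  rintro _ ⟨y, -, hy, rfl⟩
  exact hc y hy

lemma ABounded.norm_aInner_apply_le_wA (hA : A.IsPositive) (hT : ABounded A T) {z : H}
    (hz : aNorm A z = 1) : ‖aInner A (T z) z‖ ≤ wA A T := by
  obtain ⟨c, hc⟩ := hT.exists_aNorm_apply_le
  refine le_csSup ⟨c, ?_⟩ ⟨z, hz, rfl⟩
  rintro _ ⟨y, hy, rfl⟩
  calc ‖aInner A (T y) y‖ ≤ aNorm A (T y) * aNorm A y := norm_aInner_le hA _ _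
    _ ≤ c := by rw [hy, mul_one]; exact hc y hy

end

lemma csSup_eq_of_forall_le_of_tendsto {α ι : Type*} [ConditionallyCompleteLinearOrder α]
    [TopologicalSpace α] [OrderTopology α] {l : Filter ι} [l.NeBot] {s : Set α} {b : α}
    {u : ι → α} (hb : ∀ r ∈ s, r ≤ b) (hu : ∀ i, u i ∈ s) (hlim : Tendsto u l (𝓝 b)) :
    sSup s = b := by
  have hbs : b ∈ closure s := mem_closure_of_tendsto hlim (.of_forall hu)
  exact (isLUB_of_mem_closure hb hbs).csSup_eq (closure_nonempty_iff.mp ⟨b, hbs⟩)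

theorem stmt5 (A T : H →L[ℂ] H) (hA : A.IsPositive) (hT : ABounded A T)
    (α : ℝ) (hα : α ∈ Set.Ioo (0:ℝ) 1) (x : ℕ → H) (hx : ∀ n, aNorm A (x n) = 1)
    (h1 : Tendsto (fun n => aNorm A (T (x n))) atTop (𝓝 (opNormA A T)))
    (h2 : Tendsto (fun n => ‖aInner A (T (x n)) (x n)‖) atTop (𝓝 (wA A T))) :
    alphaNorm A T α = Real.sqrt (α * wA A T ^ 2 + (1 - α) * opNormA A T ^ 2) := by
  obtain ⟨hα₀, hα₁⟩ := hα
  refine csSup_eq_of_forall_le_of_tendsto ?_ (fun n => ⟨x n, hx n, rfl⟩)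
    ((Real.continuous_sqrt.tendsto _).comp (((h2.pow 2).const_mul α).add
      ((h1.pow 2).const_mul (1 - α))))
  rintro _ ⟨z, hz, rfl⟩
  have hα₁' : 0 ≤ 1 - α := by linarith
  have hTz := aNorm_nonneg (A := A) (T z)
  have hw := hT.norm_aInner_apply_le_wA hA hz
  have hop := hT.aNorm_apply_le_opNormA hA hz
  gcongr
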